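/- Let T, S ∈ B_A(H) be nonzero, and let T♯, S♯ ∈ B_A(H) be their A-adjoints, i.e., bounded operators with A·T♯ = T*A and A·S♯ = S*A whose ranges are contained in the closure of the range of A. Then ATS = AST = A if and only if A·T♯·S♯ = A·S♯·T♯ = A; that is, T is A-invertible in B_A(H) with A-inverse S if and only if T♯ is A-invertible in B_A(H) with A-inverse S♯. -/

import Mathlib

variable {H : Type*} [NormedAddCommGroup H] [InnerProductSpace ℂ H] [CompleteSpace H]

/-- The semi-norm `‖x‖_A = ⟨Ax, x⟩^{1/2}` induced by a positive operator `A`. -/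
noncomputable def anorm (A : H →L[ℂ] H) (x : H) : ℝ :=
  Real.sqrt (RCLike.re (inner ℂ (A x) x : ℂ))

/-- Membership in `B_{A^{1/2}}(H)`: there is `c > 0` with `‖Tx‖_A ≤ c ‖x‖_A` for all `x`. -/
def MemBA (A T : H →L[ℂ] H) : Prop :=
  ∃ c > 0, ∀ x : H, anorm A (T x) ≤ c * anorm A x

/-- The `A`-operator seminorm `‖T‖_A`: the least `c ≥ 0` with `‖Tx‖_A ≤ c ‖x‖_A` for all `x`. -/
noncomputable def opANorm (A T : H →L[ℂ] H) : ℝ :=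
  sInf {c : ℝ | 0 ≤ c ∧ ∀ x : H, anorm A (T x) ≤ c * anorm A x}

/-- `T` is `A`-invertible in `B_{A^{1/2}}(H)`. -/
def AInv (A T : H →L[ℂ] H) : Prop :=
  T ≠ 0 ∧ ∃ S : H →L[ℂ] H, S ≠ 0 ∧ MemBA A S ∧
    A.comp (T.comp S) = A ∧ A.comp (S.comp T) = A

/-- The `A`-resolvent set `ρ_A(T)`. -/
def rhoA (A T : H →L[ℂ] H) : Set ℂ :=
  {lam : ℂ | AInv A (lam • (1 : H →L[ℂ] H) - T)}

/-- The `A`-spectrum `σ_A(T)`. -/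
def sigmaA (A T : H →L[ℂ] H) : Set ℂ := (rhoA A T)ᶜ

/-- The `A`-spectral radius `r_A(T) = inf_{n ≥ 1} ‖T^n‖_A^{1/n}`. -/
noncomputable def rA (A T : H →L[ℂ] H) : ℝ :=
  ⨅ n : ℕ+, (opANorm A (T ^ (n : ℕ))) ^ ((((n : ℕ) : ℝ))⁻¹)

/-- `sup {|λ| : λ ∈ σ_A(T)}`. -/
noncomputable def supSpecA (A T : H →L[ℂ] H) : ℝ :=
  sSup ((fun z : ℂ => ‖z‖) '' sigmaA A T)

/-- `S` is the `A^{1/2}`-adjoint `T^⋄` of `T`. -/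
def IsDiamond (sqrtA T S : H →L[ℂ] H) : Prop :=
  sqrtA.comp S = (ContinuousLinearMap.adjoint T).comp sqrtA ∧
    Set.range (⇑S) ⊆ closure (Set.range (⇑sqrtA))

/-- The orthogonal projection of `H` onto the closure of the range of `A`. -/
noncomputable def projA (A : H →L[ℂ] H) : H →L[ℂ] H :=
  haveI : CompleteSpace ((LinearMap.range (A : H →ₗ[ℂ] H)).topologicalClosure : Submodule ℂ H) :=
    (Submodule.isClosed_topologicalClosure _).completeSpace_coe
  ((LinearMap.range (A : H →ₗ[ℂ] H)).topologicalClosure.subtypeL).comp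
    (Submodule.orthogonalProjectionOnto (LinearMap.range (A : H →ₗ[ℂ] H)).topologicalClosure)

/-! The `A`-adjoint of a product is the reversed product of the `A`-adjoints, and `X ↦ X†`
turns `A X = A` into `X† A = A`; so `A T♯ S♯ = A` says `(S T)† A = A`, i.e. `A S T = A`. -/

namespace ContinuousLinearMap

variable {𝕜 E : Type*} [RCLike 𝕜] [NormedAddCommGroup E] [InnerProductSpace 𝕜 E] [CompleteSpace E]

theorem _root_.IsSelfAdjoint.comp_eq_self_iff_adjoint_comp {A : E →L[𝕜] E} (hA : IsSelfAdjoint A)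
    (X : E →L[𝕜] E) : A.comp X = A ↔ (adjoint X).comp A = A := by
  have hAadj : adjoint A = A := hA
  constructor <;> intro h <;> simpa [adjoint_comp, hAadj] using congrArg adjoint h

theorem comp_comp_eq_adjoint_comp_comp {A T S Ts Ss : E →L[𝕜] E}
    (hTs : A.comp Ts = (adjoint T).comp A) (hSs : A.comp Ss = (adjoint S).comp A) :
    A.comp (Ts.comp Ss) = (adjoint (S.comp T)).comp A := by
  calc A.comp (Ts.comp Ss) = (adjoint T).comp (A.comp Ss) := by
        rw [← comp_assoc, hTs, comp_assoc]
    _ = (adjoint (S.comp T)).comp A := by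
        rw [hSs, adjoint_comp, comp_assoc]

end ContinuousLinearMap

theorem stmt18_general (A T S Ts Ss : H →L[ℂ] H) (hA : A.IsPositive)
    (hTs : A.comp Ts = (ContinuousLinearMap.adjoint T).comp A)
    (hSs : A.comp Ss = (ContinuousLinearMap.adjoint S).comp A) :
    (A.comp (T.comp S) = A ∧ A.comp (S.comp T) = A) ↔
      (A.comp (Ts.comp Ss) = A ∧ A.comp (Ss.comp Ts) = A) := by
  rw [ContinuousLinearMap.comp_comp_eq_adjoint_comp_comp hTs hSs,
    ContinuousLinearMap.comp_comp_eq_adjoint_comp_comp hSs hTs,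
    ← hA.isSelfAdjoint.comp_eq_self_iff_adjoint_comp,
    ← hA.isSelfAdjoint.comp_eq_self_iff_adjoint_comp]
  exact and_comm

theorem stmt18 (A T S Ts Ss : H →L[ℂ] H) (hA : A.IsPositive) (hA0 : A ≠ 0)
    (hT0 : T ≠ 0) (hS0 : S ≠ 0)
    (hTmem : Set.range (⇑((ContinuousLinearMap.adjoint T).comp A)) ⊆ Set.range (⇑A))
    (hSmem : Set.range (⇑((ContinuousLinearMap.adjoint S).comp A)) ⊆ Set.range (⇑A))
    (hTsmem : Set.range (⇑((ContinuousLinearMap.adjoint Ts).comp A)) ⊆ Set.range (⇑A))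
    (hSsmem : Set.range (⇑((ContinuousLinearMap.adjoint Ss).comp A)) ⊆ Set.range (⇑A))
    (hTs : A.comp Ts = (ContinuousLinearMap.adjoint T).comp A)
    (hTsr : Set.range (⇑Ts) ⊆ closure (Set.range (⇑A)))
    (hSs : A.comp Ss = (ContinuousLinearMap.adjoint S).comp A)
    (hSsr : Set.range (⇑Ss) ⊆ closure (Set.range (⇑A))) :
    (A.comp (T.comp S) = A ∧ A.comp (S.comp T) = A) ↔
      (A.comp (Ts.comp Ss) = A ∧ A.comp (Ss.comp Ts) = A) :=
  stmt18_general A T S Ts Ss hA hTs hSs
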